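/- The disjunction property fails for the Russell-Prawitz translation of disjunction in atomic System F: letting A = ∀X∀Y.X⊃Y and B = ∀Y.(∀X.(A⊃X)⊃Y)⊃Y, the formula ∀X.(A⊃X)⊃(B⊃X)⊃X is derivable in NI²_at, yet neither A nor B is derivable in NI²_at. -/
import Mathlib


/-!
Statement 0: every universal polynomial formula enjoys the instantiation
overflow property in atomic System F (NI²_at).
-/

/-- Formulas of second-order propositional logic: variables, ⊃, ∀. -/
inductive Fm : Type
  | var : ℕ → Fm
  | imp : Fm → Fm → Fm
  | all : ℕ → Fm → Fm
deriving DecidableEq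

namespace Fm

/-- `Free X A`: the variable `X` occurs free in `A`. -/
def Free (X : ℕ) : Fm → Prop
  | var Y => X = Y
  | imp A B => Free X A ∨ Free X B
  | all Y A => X ≠ Y ∧ Free X A

/-- Substitution of `C` for the free occurrences of `X`. -/
def subst (X : ℕ) (C : Fm) : Fm → Fm
  | var Y => if X = Y then C else var Y
  | imp A B => imp (subst X C A) (subst X C B)
  | all Y A => if X = Y then all Y A else all Y (subst X C A)

/-- `C` is substitutable (free) for `X` in the given formula (no capture). -/
def FreeFor (C : Fm) (X : ℕ) : Fm → Prop
  | var _ => True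
  | imp A B => FreeFor C X A ∧ FreeFor C X B
  | all Y A => (¬ Free X (all Y A)) ∨ (¬ Free Y C ∧ FreeFor C X A)

end Fm

/-- Natural deduction for second-order propositional logic.  When
`atomic = true` the witness of ∀-elimination must be a variable
(this is the system `NI²_at`, atomic System F). -/
inductive Deriv (atomic : Bool) : Set Fm → Fm → Prop
  | ax {Γ A} : A ∈ Γ → Deriv atomic Γ A
  | impI {Γ A B} : Deriv atomic (insert A Γ) B → Deriv atomic Γ (.imp A B)
  | impE {Γ A B} : Deriv atomic Γ (.imp A B) → Deriv atomic Γ A → Deriv atomic Γ B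
  | allI {Γ X A} : Deriv atomic Γ A → (∀ B ∈ Γ, ¬ Fm.Free X B) →
      Deriv atomic Γ (.all X A)
  | allE {Γ X A C} : Deriv atomic Γ (.all X A) → Fm.FreeFor C X A →
      (atomic = true → ∃ Y, C = Fm.var Y) →
      Deriv atomic Γ (Fm.subst X C A)

/-- `A = ∀X∀Y. X ⊃ Y`. -/
def A0 : Fm := .all 0 (.all 1 (.imp (.var 0) (.var 1)))

/-- `B = ∃X.(A⊃X)`, where `∃X.C` abbreviates `∀Y.(∀X.C⊃Y)⊃Y`;
here `B = ∀Y.(∀X.(A⊃X)⊃Y)⊃Y` with `X = 0`, `Y = 1`. -/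
def B0 : Fm := .all 1 (.imp (.all 0 (.imp (.imp A0 (.var 0)) (.var 1))) (.var 1))

/-- `(A∨B)* = ∀X.(A⊃X)⊃(B⊃X)⊃X`. -/
def RPor (A B : Fm) : Fm :=
  .all 0 (.imp (.imp A (.var 0)) (.imp (.imp B (.var 0)) (.var 0)))

-- ===== auxiliary =====
namespace RPAux

/-- Substitutional semantics with a fixed domain `D` of propositions. -/
def eval (D : Set Prop) : Fm → (ℕ → Prop) → Prop
  | .var n, v => v n
  | .imp A B, v => eval D A v → eval D B v
  | .all X A, v => ∀ p ∈ D, eval D A (Function.update v X p)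

theorem eval_congr (D : Set Prop) : ∀ (A : Fm) (v w : ℕ → Prop),
    (∀ X, Fm.Free X A → v X = w X) → (eval D A v ↔ eval D A w)
  | .var n, v, w, h => by
      simpa [eval] using iff_of_eq (h n rfl)
  | .imp A B, v, w, h => by
      simp only [eval]
      rw [eval_congr D A v w (fun X hX => h X (Or.inl hX)),
          eval_congr D B v w (fun X hX => h X (Or.inr hX))]
  | .all Y A, v, w, h => by
      simp only [eval]
      have key : ∀ p, eval D A (Function.update v Y p) ↔ eval D A (Function.update w Y p) := by
        intro p
        refine eval_congr D A _ _ (fun X hX => ?_)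
        by_cases hXY : X = Y
        · subst hXY; simp
        · simp [Function.update_of_ne hXY]
          exact iff_of_eq (h X ⟨hXY, hX⟩)
      exact forall_congr' fun p => imp_congr Iff.rfl (key p)

theorem subst_nonfree : ∀ (A : Fm) (X : ℕ) (C : Fm), ¬ Fm.Free X A → Fm.subst X C A = A
  | .var n, X, C, h => by
      simp only [Fm.subst]
      rw [if_neg]; exact fun hXn => h hXn
  | .imp A B, X, C, h => by
      simp only [Fm.subst]
      rw [subst_nonfree A X C (fun hA => h (Or.inl hA)),
          subst_nonfree B X C (fun hB => h (Or.inr hB))]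
  | .all Y A, X, C, h => by
      simp only [Fm.subst]
      by_cases hXY : X = Y
      · rw [if_pos hXY]
      · rw [if_neg hXY, subst_nonfree A X C (fun hA => h ⟨hXY, hA⟩)]

theorem eval_subst (D : Set Prop) : ∀ (A : Fm) (X : ℕ) (C : Fm) (v : ℕ → Prop),
    Fm.FreeFor C X A →
    (eval D (Fm.subst X C A) v ↔ eval D A (Function.update v X (eval D C v)))
  | .var n, X, C, v, _ => by
      by_cases hXn : X = n
      · subst hXn; simp [Fm.subst, eval]
      · simp [Fm.subst, hXn, eval, Function.update_of_ne (Ne.symm hXn)]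
  | .imp A B, X, C, v, hf => by
      simp only [Fm.subst, eval]
      rw [eval_subst D A X C v hf.1, eval_subst D B X C v hf.2]
  | .all Y A, X, C, v, hf => by
      by_cases hXY : X = Y
      · subst hXY
        simp only [Fm.subst, if_pos rfl, eval]
        refine forall_congr' fun p => imp_congr Iff.rfl ?_
        refine eval_congr D A _ _ (fun Z _ => ?_)
        by_cases hZ : Z = X
        · subst hZ; simp
        · simp [Function.update_of_ne hZ]
      · simp only [Fm.subst, if_neg hXY, eval]
        rcases hf with hnf | ⟨hYC, hfA⟩
        · -- X not free in all Y A, hence not free in A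
          have hnfA : ¬ Fm.Free X A := fun hA => hnf ⟨hXY, hA⟩
          rw [subst_nonfree A X C hnfA]
          refine forall_congr' fun p => imp_congr Iff.rfl ?_
          refine eval_congr D A _ _ (fun Z hZ => ?_)
          by_cases hZY : Z = Y
          · subst hZY; simp
          · simp only [Function.update_of_ne hZY]
            by_cases hZX : Z = X
            · exact absurd (hZX ▸ hZ) hnfA
            · simp [Function.update_of_ne hZX]
        · refine forall_congr' fun p => imp_congr Iff.rfl ?_
          rw [eval_subst D A X C (Function.update v Y p) hfA]
          have hCv : eval D C (Function.update v Y p) = eval D C v := by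
            refine propext (eval_congr D C _ _ (fun Z hZ => ?_))
            have hZY : Z ≠ Y := fun h => hYC (h ▸ hZ)
            simp [Function.update_of_ne hZY]
          rw [hCv]
          refine eval_congr D A _ _ (fun Z _ => ?_)
          by_cases hZX : Z = X
          · subst hZX; simp [Function.update_of_ne hXY]
          · by_cases hZY : Z = Y
            · subst hZY; simp [Function.update_of_ne (Ne.symm hXY)]
            · simp [Function.update_of_ne hZX, Function.update_of_ne hZY]

theorem sound (D : Set Prop) {Γ : Set Fm} {A : Fm} (d : Deriv true Γ A) :
    ∀ (v : ℕ → Prop), (∀ n, v n ∈ D) → (∀ G ∈ Γ, eval D G v) → eval D A v := by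
  induction d with
  | ax hA => intro v _ hΓ; exact hΓ _ hA
  | impI _ ih =>
      intro v hv hΓ
      intro hA
      exact ih v hv (by
        intro G hG
        rcases hG with hG | hG
        · subst hG; exact hA
        · exact hΓ G hG)
  | impE _ _ ih1 ih2 =>
      intro v hv hΓ
      exact ih1 v hv hΓ (ih2 v hv hΓ)
  | @allI Γ' X A' _ hfresh ih =>
      intro v hv hΓ
      intro p hp
      refine ih (Function.update v X p) ?_ ?_
      · intro n
        by_cases hn : n = X
        · subst hn; simpa
        · simpa [Function.update_of_ne hn] using hv n
      · intro G hG
        refine (eval_congr D G _ _ (fun Z hZ => ?_)).mp (hΓ G hG)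
        have hne : Z ≠ X := fun h => hfresh G hG (h ▸ hZ)
        simp [Function.update_of_ne hne]
  | @allE Γ X A C _ hfree hatom ih =>
      intro v hv hΓ
      obtain ⟨Y, rfl⟩ := hatom rfl
      rw [eval_subst D A X (Fm.var Y) v hfree]
      exact ih v hv hΓ (v Y) (hv Y)

end RPAux


/-- Failure of the disjunction property for the Russell-Prawitz translation
of disjunction in atomic System F: `(A∨B)*` is derivable in `NI²_at`, yet
neither `A` nor `B` is. -/
theorem rp_disjunction_property_fails :
    Deriv true (∅ : Set Fm) (RPor A0 B0) ∧
      ¬ Deriv true (∅ : Set Fm) A0 ∧ ¬ Deriv true (∅ : Set Fm) B0 := by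
  refine ⟨?_, ?_, ?_⟩
  · -- derivation of (A0 ∨ B0)* in NI²_at
    refine Deriv.allI (Deriv.impI (Deriv.impI ?_)) (by simp)
    -- context: h2 = B0 ⊃ var 0, h1 = A0 ⊃ var 0 ; goal : var 0
    refine Deriv.impE (A := B0) (Deriv.ax (Set.mem_insert _ _)) ?_
    -- goal : B0
    show Deriv true _ (.all 1 (.imp (.all 0 (.imp (.imp A0 (.var 0)) (.var 1))) (.var 1)))
    refine Deriv.allI (Deriv.impI ?_) ?_
    · -- context also has h : ∀0.((A0⊃0)⊃1) ; goal : var 1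
      have e := Deriv.allE (atomic := true) (X := 0)
        (Γ := insert (.all 0 (.imp (.imp A0 (.var 0)) (.var 1)))
          (insert (.imp B0 (.var 0)) (insert (.imp A0 (.var 0)) (∅ : Set Fm))))
        (A := .imp (.imp A0 (.var 0)) (.var 1)) (C := .var 0)
        (Deriv.ax (Set.mem_insert _ _))
        (by simp [Fm.FreeFor, Fm.Free, A0]) (fun _ => ⟨0, rfl⟩)
      have hsub : Fm.subst 0 (Fm.var 0) (.imp (.imp A0 (.var 0)) (.var 1))
          = .imp (.imp A0 (.var 0)) (.var 1) := by decide
      rw [hsub] at e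
      refine Deriv.impE e (Deriv.ax ?_)
      exact Or.inr (Or.inr (Or.inl rfl))
    · intro B hB
      rcases hB with h | h | h
      · subst h; simp [Fm.Free, B0, A0]
      · subst h; simp [Fm.Free, A0]
      · cases h
  · -- ¬ ⊢ A0 : full Prop semantics, D = univ
    intro d
    have h := RPAux.sound Set.univ d (fun n => n = 0) (fun _ => trivial) (by simp)
    have h2 := h True trivial False trivial
    simp [RPAux.eval, A0, Function.update] at h2
  · -- ¬ ⊢ B0 : D = {False}, v ≡ False
    intro d
    have h := RPAux.sound {False} d (fun _ => False) (fun _ => rfl) (by simp)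
    have h2 := h False rfl
    simp only [RPAux.eval, B0, A0, Function.update] at h2
    simp at h2
    obtain ⟨x, hx, hi⟩ := h2
    exact hx (hi (fun p hp q hq hP => absurd hP hp))
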